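/- arXiv:2011.12583 — 3 statements merged into one kernel-verified Lean document; each statement's English description precedes it below -/
import Mathlib

section
/- Let ℓ ≥ 2 and let (A_n)_{n∈ℕ} be a sequence of invertible ℓ×ℓ complex matrices such that |det(A_n)| → ∞ as n → ∞. Then there exist indices i, j ∈ Fin ℓ and a strictly increasing function φ : ℕ → ℕ such that the absolute value of the (i,j)-minor of A_{φ(n)} tends to infinity as n → ∞. -/
/-!
The adjugate of `A` has determinant `det A ^ m` and its entries are, up to sign, the
`m × m` minors of `A`; the Leibniz bound `|det B| ≤ (m+1)! · (max |Bᵢⱼ|)^(m+1)` applied to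
`B = adj A` therefore forces the largest minor of `A n` to diverge. Since there are only
finitely many positions `(i, j)`, they cannot all stay bounded on a tail of the sequence,
and an unbounded one diverges along a subsequence.
-/

open Filter

theorem Filter.exists_strictMono_tendsto_atTop_of_eventually_exists_le {ι : Type*} [Finite ι]
    {f : ι → ℕ → ℝ} (h : ∀ b, ∀ᶠ n in atTop, ∃ i, b ≤ f i n) :
    ∃ i, ∃ φ : ℕ → ℕ, StrictMono φ ∧ Tendsto (f i ∘ φ) atTop atTop := by
  by_contra! hno
  have hbdd : ∀ i, ∃ b, ∀ᶠ n in atTop, f i n < b := by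
    intro i
    by_contra! hfreq
    obtain ⟨φ, hφ, hle⟩ := extraction_forall_of_frequently fun k : ℕ => hfreq k
    exact hno i φ hφ (tendsto_atTop_mono hle tendsto_natCast_atTop_atTop)
  choose b hb using hbdd
  obtain ⟨B, hB⟩ := Finite.bddAbove_range b
  obtain ⟨n, hlt, i, hle⟩ := ((eventually_all.2 hb).and (h B)).exists
  exact (hle.trans_lt (hlt i)).not_ge (hB (Set.mem_range_self i))

theorem Matrix.norm_det_pow_le_of_norm_det_submatrix_le {𝕜 : Type*} [NormedField 𝕜] {m : ℕ}
    (A : Matrix (Fin (m + 1)) (Fin (m + 1)) 𝕜) {M : ℝ}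
    (hM : ∀ i j : Fin (m + 1), ‖(A.submatrix i.succAbove j.succAbove).det‖ ≤ M) :
    ‖A.det‖ ^ m ≤ (m + 1).factorial * M ^ (m + 1) := by
  have hadj : ∀ i j, ‖A.adjugate i j‖ ≤ M := fun i j => by
    simpa [adjugate_fin_succ_eq_det_submatrix] using hM j i
  calc ‖A.det‖ ^ m = ‖A.adjugate.det‖ := by simp [det_adjugate]
    _ ≤ (m + 1).factorial * M ^ (m + 1) := by
      have h := det_le (abv := NormedField.toAbsoluteValue 𝕜) hadj
      rwa [Fintype.card_fin, nsmul_eq_mul] at h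

theorem minors_diverge_of_det_diverges_general (m : ℕ) (hm : 1 ≤ m)
    (A : ℕ → Matrix (Fin (m + 1)) (Fin (m + 1)) ℂ)
    (hdet : Filter.Tendsto (fun n => ‖(A n).det‖) Filter.atTop Filter.atTop) :
    ∃ (i j : Fin (m + 1)) (φ : ℕ → ℕ), StrictMono φ ∧
      Filter.Tendsto
        (fun n => ‖((A (φ n)).submatrix i.succAbove j.succAbove).det‖)
        Filter.atTop Filter.atTop := by
  have hpow : Tendsto (fun n => ‖(A n).det‖ ^ m) atTop atTop :=
    (tendsto_pow_atTop (by omega)).comp hdet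
  have hlarge : ∀ b, ∀ᶠ n in atTop, ∃ p : Fin (m + 1) × Fin (m + 1),
      b ≤ ‖((A n).submatrix p.1.succAbove p.2.succAbove).det‖ := fun b => by
    filter_upwards [hpow.eventually_gt_atTop ((m + 1).factorial * b ^ (m + 1))] with n hn
    by_contra! hsmall
    exact hn.not_ge <|
      (A n).norm_det_pow_le_of_norm_det_submatrix_le fun i j => (hsmall (i, j)).le
  obtain ⟨⟨i, j⟩, φ, hφ, hlim⟩ := exists_strictMono_tendsto_atTop_of_eventually_exists_le hlarge
  exact ⟨i, j, φ, hφ, hlim⟩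

/-- If `(A n)` is a sequence of invertible `(m+1) × (m+1)` complex matrices (with `m + 1 ≥ 2`,
i.e. `1 ≤ m`) whose determinants diverge in absolute value, then there are indices `i j` and a
strictly increasing `φ : ℕ → ℕ` such that the `(i,j)`-minor of `A (φ n)` diverges in absolute
value. -/
theorem minors_diverge_of_det_diverges (m : ℕ) (hm : 1 ≤ m)
    (A : ℕ → Matrix (Fin (m + 1)) (Fin (m + 1)) ℂ)
    (hinv : ∀ n, IsUnit (A n))
    (hdet : Filter.Tendsto (fun n => ‖(A n).det‖) Filter.atTop Filter.atTop) :
    ∃ (i j : Fin (m + 1)) (φ : ℕ → ℕ), StrictMono φ ∧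
      Filter.Tendsto
        (fun n => ‖((A (φ n)).submatrix i.succAbove j.succAbove).det‖)
        Filter.atTop Filter.atTop :=
  minors_diverge_of_det_diverges_general m hm A hdet
end

section
/- Let p ≥ 1, let ε > 0 be a real number, and let A be a p×p complex matrix such that ‖A·v‖ ≥ ε for every vector v ∈ ℂ^p with ‖v‖ = 1, where ‖·‖ is the Euclidean (hermitian) norm on ℂ^p. Then for every v ∈ ℂ^p one has ε^{p−1} · ‖A·v‖ ≤ |det(A)| · ‖v‖ (equivalently, ε^{p−1} · ‖A‖ ≤ |det(A)| where ‖A‖ is the operator norm of A with respect to the Euclidean norm). -/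
/-!
Let `σ₀ ≥ σ₁ ≥ ⋯` be the singular values of `A`, i.e. the square roots of the eigenvalues of
`A†A`. Then `|det A| = ∏ σᵢ` and `‖A v‖ ≤ σ₀ ‖v‖`, while each `σᵢ = ‖A uᵢ‖` for a unit
eigenvector `uᵢ` of `A†A`, so the hypothesis gives `σᵢ ≥ ε`. Bounding all factors but `σ₀`
from below by `ε` yields `ε ^ (p - 1) ‖A v‖ ≤ ε ^ (p - 1) σ₀ ‖v‖ ≤ |det A| ‖v‖`.
-/

open Module InnerProductSpace

theorem Finset.pow_card_sub_one_mul_le_prod {ι R : Type*} [CommSemiring R] [PartialOrder R]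
    [IsOrderedRing R] {s : Finset ι} {f : ι → R} {a : R} {j : ι} (hj : j ∈ s) (ha : 0 ≤ a)
    (h : ∀ i ∈ s, a ≤ f i) :
    a ^ (s.card - 1) * f j ≤ ∏ i ∈ s, f i := by
  classical
  rw [← Finset.mul_prod_erase s f hj, mul_comm, ← Finset.card_erase_of_mem hj, ← Finset.prod_const]
  have hfj : 0 ≤ f j := ha.trans (h j hj)
  gcongr with i hi
  exact h i (Finset.mem_of_mem_erase hi)

namespace LinearMap

variable {𝕜 E F : Type*} [RCLike 𝕜]
  [NormedAddCommGroup E] [InnerProductSpace 𝕜 E] [FiniteDimensional 𝕜 E]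
  [NormedAddCommGroup F] [InnerProductSpace 𝕜 F] [FiniteDimensional 𝕜 F]

theorem sq_norm_apply_eq_sum_singularValues (T : E →ₗ[𝕜] F) {n : ℕ} (hn : finrank 𝕜 E = n)
    (x : E) :
    ‖T x‖ ^ 2 = ∑ i : Fin n, T.singularValues i ^ 2 *
      ‖(T.isSymmetric_adjoint_comp_self.eigenvectorBasis hn).repr x i‖ ^ 2 := by
  have h : ‖T x‖ ^ 2 = RCLike.re (K := 𝕜) ⟪x, (T.adjoint ∘ₗ T) x⟫_𝕜 := by
    rw [comp_apply, adjoint_inner_right, ← inner_self_eq_norm_sq (𝕜 := 𝕜)]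
  rw [h, ← (T.isSymmetric_adjoint_comp_self.eigenvectorBasis hn).repr.inner_map_map,
    PiLp.inner_apply, map_sum]
  congr 1 with i
  rw [T.isSymmetric_adjoint_comp_self.eigenvectorBasis_apply_self_apply,
    ← T.sq_singularValues_fin hn, RCLike.inner_apply, mul_assoc, RCLike.mul_conj]
  norm_cast

theorem norm_apply_le_singularValues_zero_mul (T : E →ₗ[𝕜] F) (x : E) :
    ‖T x‖ ≤ T.singularValues 0 * ‖x‖ := by
  set b := T.isSymmetric_adjoint_comp_self.eigenvectorBasis rfl
  refine (pow_le_pow_iff_left₀ (norm_nonneg _)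
    (mul_nonneg (T.singularValues_nonneg 0) (norm_nonneg _)) two_ne_zero).mp ?_
  rw [T.sq_norm_apply_eq_sum_singularValues rfl, mul_pow, ← b.repr.norm_map,
    EuclideanSpace.norm_sq_eq, Finset.mul_sum]
  gcongr with i
  · exact T.singularValues_nonneg i
  · exact T.singularValues_antitone (Nat.zero_le i)

theorem norm_apply_eigenvectorBasis (T : E →ₗ[𝕜] F) {n : ℕ} (hn : finrank 𝕜 E = n) (i : Fin n) :
    ‖T (T.isSymmetric_adjoint_comp_self.eigenvectorBasis hn i)‖ = T.singularValues i := by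
  refine (pow_left_inj₀ (norm_nonneg _) (T.singularValues_nonneg i) two_ne_zero).mp ?_
  rw [T.sq_norm_apply_eq_sum_singularValues hn, OrthonormalBasis.repr_self]
  simp [PiLp.single_apply, apply_ite (fun z : 𝕜 => ‖z‖ ^ 2)]

theorem pow_finrank_sub_one_mul_norm_apply_le_norm_det_mul (T : E →ₗ[𝕜] E) {ε : ℝ} (hε : 0 ≤ ε)
    (h : ∀ x, ‖x‖ = 1 → ε ≤ ‖T x‖) (x : E) :
    ε ^ (finrank 𝕜 E - 1) * ‖T x‖ ≤ ‖T.det‖ * ‖x‖ := by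
  rcases (finrank 𝕜 E).eq_zero_or_pos with hE | hE
  · have : Subsingleton E := finrank_zero_iff.mp hE
    simp [Subsingleton.elim x 0]
  have hσ : ∀ i ∈ Finset.range (finrank 𝕜 E), ε ≤ T.singularValues i := fun i hi => by
    rw [← T.norm_apply_eigenvectorBasis rfl ⟨i, Finset.mem_range.mp hi⟩]
    exact h _ ((T.isSymmetric_adjoint_comp_self.eigenvectorBasis rfl).orthonormal.1 _)
  calc ε ^ (finrank 𝕜 E - 1) * ‖T x‖
      ≤ ε ^ (finrank 𝕜 E - 1) * (T.singularValues 0 * ‖x‖) := by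
        gcongr; exact T.norm_apply_le_singularValues_zero_mul x
    _ = ε ^ (finrank 𝕜 E - 1) * T.singularValues 0 * ‖x‖ := (mul_assoc _ _ _).symm
    _ ≤ (∏ i ∈ Finset.range (finrank 𝕜 E), T.singularValues i) * ‖x‖ := by
        gcongr
        simpa using Finset.pow_card_sub_one_mul_le_prod (Finset.mem_range.mpr hE) hε hσ
    _ = ‖T.det‖ * ‖x‖ := by rw [← normDet_eq_prod_singularValues, normDet_eq_norm_det]

end LinearMap

theorem det_lower_bound_euclidean_general (p : ℕ) (ε : ℝ) (hε : 0 < ε)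
    (A : Matrix (Fin p) (Fin p) ℂ)
    (hA : ∀ v : EuclideanSpace ℂ (Fin p), ‖v‖ = 1 →
      ε ≤ ‖(EuclideanSpace.equiv (Fin p) ℂ).symm (A.mulVec ((EuclideanSpace.equiv (Fin p) ℂ) v))‖) :
    ∀ v : EuclideanSpace ℂ (Fin p),
      ε ^ (p - 1) *
          ‖(EuclideanSpace.equiv (Fin p) ℂ).symm (A.mulVec ((EuclideanSpace.equiv (Fin p) ℂ) v))‖
        ≤ ‖A.det‖ * ‖v‖ := by
  intro v
  have := (A.toLpLin 2 2).pow_finrank_sub_one_mul_norm_apply_le_norm_det_mul hε.le hA v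
  rwa [finrank_euclideanSpace_fin, LinearMap.det_toLpLin] at this

/-- If every Euclidean-unit vector `v` satisfies `‖A v‖ ≥ ε`, then
`ε ^ (p - 1) * ‖A v‖ ≤ |det A| * ‖v‖` for every `v`. -/
theorem det_lower_bound_euclidean (p : ℕ) (hp : 1 ≤ p) (ε : ℝ) (hε : 0 < ε)
    (A : Matrix (Fin p) (Fin p) ℂ)
    (hA : ∀ v : EuclideanSpace ℂ (Fin p), ‖v‖ = 1 →
      ε ≤ ‖(EuclideanSpace.equiv (Fin p) ℂ).symm (A.mulVec ((EuclideanSpace.equiv (Fin p) ℂ) v))‖) :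
    ∀ v : EuclideanSpace ℂ (Fin p),
      ε ^ (p - 1) *
          ‖(EuclideanSpace.equiv (Fin p) ℂ).symm (A.mulVec ((EuclideanSpace.equiv (Fin p) ℂ) v))‖
        ≤ ‖A.det‖ * ‖v‖ :=
  det_lower_bound_euclidean_general p ε hε A hA
end

section
/- Let p ≥ 2, let m > 0 be a real number, and let (B_n)_{n∈ℕ} be a sequence of p×p complex matrices such that |det(B_n)| ≥ m for every n and such that the last column of B_n converges to the zero vector as n → ∞. Then there exist an index i ∈ Fin p and a strictly increasing function φ : ℕ → ℕ such that the absolute value of the minor of B_{φ(n)} obtained by deleting row i and the last column tends to infinity as n → ∞. -/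
/-!
Expanding `det B_n` along its last column gives
`m ≤ |det B_n| ≤ (∑ᵢ |B_n(i, last)|) · maxᵢ |minor_i(B_n)|`.
The sum tends to `0`, so the largest minor tends to infinity; as there are only finitely many
rows, one row `i` realises the maximum for infinitely many `n`, and along those `n` its minor
diverges.
-/

open Filter Topology

theorem Filter.exists_strictMono_tendsto_of_finite {ι β : Type*} [Finite ι] {l : Filter β}
    {c : ℕ → ι → β} (f : ℕ → ι) (h : Tendsto (fun n => c n (f n)) atTop l) :
    ∃ (i : ι) (φ : ℕ → ℕ), StrictMono φ ∧ Tendsto (fun n => c (φ n) i) atTop l := by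
  obtain ⟨i, hi⟩ : ∃ i, ∃ᶠ n in atTop, f n = i :=
    frequently_exists.mp (Frequently.of_forall fun n => ⟨f n, rfl⟩)
  obtain ⟨φ, hφ, hφi⟩ := extraction_of_frequently_atTop hi
  exact ⟨i, φ, hφ, (h.comp hφ.tendsto_atTop).congr fun n => by simp [hφi n]⟩

theorem Filter.tendsto_atTop_of_le_mul_of_tendsto_zero {α : Type*} {l : Filter α} {s M : α → ℝ}
    {m : ℝ} (hm : 0 < m) (hs_nonneg : ∀ x, 0 ≤ s x) (hs : Tendsto s l (𝓝 0))
    (h : ∀ x, m ≤ s x * M x) : Tendsto M l atTop := by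
  have hs_pos : ∀ x, 0 < s x := fun x =>
    (hs_nonneg x).lt_of_ne fun h0 => by simpa [← h0] using hm.trans_le (h x)
  have hinv : Tendsto (fun x => m * (s x)⁻¹) l atTop :=
    (tendsto_nhdsWithin_of_tendsto_nhds_of_eventually_within s hs
      (Eventually.of_forall hs_pos)).inv_tendsto_nhdsGT_zero.const_mul_atTop hm
  refine tendsto_atTop_mono (fun x => ?_) hinv
  rw [← div_eq_mul_inv, div_le_iff₀ (hs_pos x), mul_comm]
  exact h x

theorem Matrix.exists_norm_det_le_sum_norm_mul_norm_det_submatrix {R : Type*} [NormedCommRing R]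
    [NormOneClass R] {n : ℕ} (A : Matrix (Fin (n + 1)) (Fin (n + 1)) R) (j : Fin (n + 1)) :
    ∃ i : Fin (n + 1), ‖A.det‖ ≤ (∑ k, ‖A k j‖) * ‖(A.submatrix i.succAbove j.succAbove).det‖ := by
  set minor : Fin (n + 1) → ℝ := fun k => ‖(A.submatrix k.succAbove j.succAbove).det‖
  obtain ⟨i, hi⟩ := Finite.exists_max minor
  refine ⟨i, ?_⟩
  calc ‖A.det‖
      ≤ ∑ k : Fin (n + 1),
          ‖(-1) ^ (k + j : ℕ) * A k j * (A.submatrix k.succAbove j.succAbove).det‖ := by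
        rw [det_succ_column A j]; exact norm_sum_le _ _
    _ ≤ ∑ k, ‖A k j‖ * minor i := by
        gcongr with k
        refine (norm_mul_le _ _).trans (mul_le_mul ?_ (hi k) (norm_nonneg _) (norm_nonneg _))
        rcases neg_one_pow_eq_or R (k + j : ℕ) with h | h <;> simp [h]
    _ = (∑ k, ‖A k j‖) * minor i := (Finset.sum_mul ..).symm

/-- If `(B n)` is a sequence of `(q+2) × (q+2)` complex matrices (size `p = q + 2 ≥ 2`) with
`|det (B n)| ≥ m > 0` and whose last column tends to `0`, then some fixed minor obtained by
deleting a row `i` and the last column diverges in absolute value along a subsequence. -/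
theorem minor_diverges_of_last_col_small (q : ℕ) (m : ℝ) (hm : 0 < m)
    (B : ℕ → Matrix (Fin (q + 2)) (Fin (q + 2)) ℂ)
    (hdet : ∀ n, m ≤ ‖(B n).det‖)
    (hcol : ∀ i : Fin (q + 2),
      Filter.Tendsto (fun n => B n i (Fin.last (q + 1))) Filter.atTop (nhds 0)) :
    ∃ (i : Fin (q + 2)) (φ : ℕ → ℕ), StrictMono φ ∧
      Filter.Tendsto
        (fun n =>
          ‖((B (φ n)).submatrix i.succAbove (Fin.last (q + 1)).succAbove).det‖)
        Filter.atTop Filter.atTop := by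
  choose f hf using fun n =>
    (B n).exists_norm_det_le_sum_norm_mul_norm_det_submatrix (Fin.last (q + 1))
  have hcol_norm : Tendsto (fun n => ∑ k, ‖B n k (Fin.last (q + 1))‖) atTop (𝓝 0) := by
    simpa using tendsto_finsetSum _ fun k _ => (hcol k).norm
  have hminor : Tendsto (fun n =>
      ‖((B n).submatrix (f n).succAbove (Fin.last (q + 1)).succAbove).det‖) atTop atTop :=
    tendsto_atTop_of_le_mul_of_tendsto_zero hm
      (fun n => Finset.sum_nonneg fun k _ => norm_nonneg _) hcol_norm fun n => (hdet n).trans (hf n)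
  exact exists_strictMono_tendsto_of_finite (ι := Fin (q + 2))
    (c := fun n i => ‖((B n).submatrix i.succAbove (Fin.last (q + 1)).succAbove).det‖) f hminor
end
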